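/- Let t ∈ ℝ, p ∈ [0,1], and let E₀ = [[1,0],[0,√(1−p)]], E₁ = [[0,0],[0,√p]] be the Phase Damping Kraus operators. Set M_k := U_qs(t)† · (E_k ⊗ I₄) for k = 0,1 (noise acting on the first of the three qubits). Then the average fidelity F_avg := (1/(8·9))·(tr(M₀†M₀ + M₁†M₁) + |tr M₀|² + |tr M₁|²) equals (1/72)·((√(1−p) + 1)²·(cos(t) + 3)² + p·(cos(t) + 3)² + 8). -/

import Mathlib

open Matrix Complex

/-- The Hamiltonian of the quantum qubit switch: the 8×8 complex matrix whose only
nonzero entries are `(H_qs)_{3,5} = (H_qs)_{5,3} = 1`. -/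
noncomputable def Hqs : Matrix (Fin 8) (Fin 8) ℂ :=
  Matrix.of fun i j =>
    if (i = 3 ∧ j = 5) ∨ (i = 5 ∧ j = 3) then 1 else 0

/-- The time-evolution operator `U_qs(t) = exp(−i t H_qs)` (matrix exponential). -/
noncomputable def Uqs (t : ℝ) : Matrix (Fin 8) (Fin 8) ℂ :=
  NormedSpace.exp ((-(Complex.I * (t : ℂ))) • Hqs)

/-- Kronecker product `E ⊗ I₄` of a one-qubit operator E with the identity on the
remaining two qubits: entry (4a+r, 4b+c) is `E a b · δ_{r c}`. -/
noncomputable def kronI4 (E : Matrix (Fin 2) (Fin 2) ℂ) : Matrix (Fin 8) (Fin 8) ℂ :=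
  Matrix.of fun r c =>
    E ⟨r.val / 4, by omega⟩ ⟨c.val / 4, by omega⟩ *
      (if r.val % 4 = c.val % 4 then 1 else 0)

/-- Average fidelity between U_qs(t) and the noisy evolution given by Kraus operators
E₀, E₁ acting on the first qubit: with M_k = U_qs(t)†·(E_k ⊗ I₄) and n = 8,
F_avg = (1/(n(n+1)))·(tr(M₀†M₀ + M₁†M₁) + |tr M₀|² + |tr M₁|²). -/
noncomputable def Favg (t : ℝ) (E₀ E₁ : Matrix (Fin 2) (Fin 2) ℂ) : ℂ :=
  (1 / (8 * 9) : ℂ) *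
    ((((Uqs t)ᴴ * kronI4 E₀)ᴴ * ((Uqs t)ᴴ * kronI4 E₀)
      + ((Uqs t)ᴴ * kronI4 E₁)ᴴ * ((Uqs t)ᴴ * kronI4 E₁)).trace
    + ((‖((Uqs t)ᴴ * kronI4 E₀).trace‖ ^ 2 : ℝ) : ℂ)
    + ((‖((Uqs t)ᴴ * kronI4 E₁).trace‖ ^ 2 : ℝ) : ℂ))

/-!
`Hqs` swaps the basis states `|011⟩` and `|101⟩`, so it is diagonalizable with eigenvalues
`0, ±1`; hence `U_qs(t) = 1 + (cos t - 1) Hqs² - i sin t Hqs`, whose diagonal is `1` except for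
`cos t` at the indices `3` and `5`. The Phase Damping Kraus operators are diagonal, so `E ⊗ I₄`
is diagonal and `tr (U_qs(t)† (E ⊗ I₄)) = (3 + cos t) tr E`, since each block of four indices
sharing the first qubit contains exactly one of `3, 5`. By unitarity of `U_qs(t)`,
`tr (M_k† M_k) = 4 tr (E_k† E_k)`, and `E₀† E₀ + E₁† E₁ = 1` makes these sum to `8`.
-/

theorem Matrix.exp_neg_I_mul_smul_eq_of_conj_diagonal {n : Type*} [Fintype n] [DecidableEq n]
    {A : Matrix n n ℂ} (V : (Matrix n n ℂ)ˣ) (μ : n → ℂ)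
    (hA : A = V * (diagonal μ : Matrix n n ℂ) * V⁻¹)
    (hμ : ∀ i, μ i = -1 ∨ μ i = 0 ∨ μ i = 1) (t : ℂ) :
    NormedSpace.exp ((-(I * t)) • A) = 1 + (cos t - 1) • A ^ 2 - (I * sin t) • A := by
  have hexp : ∀ i, cexp (-(I * t * μ i)) = 1 + (cos t - 1) * μ i ^ 2 - I * sin t * μ i := by
    intro i
    have hpos : cexp (I * t) = cos t + sin t * I := by rw [mul_comm, exp_mul_I]
    have hneg : cexp (-(I * t)) = cos t - sin t * I := by
      rw [← mul_neg, mul_comm, exp_mul_I, cos_neg, sin_neg]; ring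
    rcases hμ i with h | h | h <;> simp only [h] <;> simp [hpos, hneg] <;> ring
  have hconj (M : Matrix n n ℂ) (c : ℂ) :
      c • (V * M * V⁻¹ : Matrix n n ℂ) = V * (c • M) * V⁻¹ := by
    rw [Matrix.mul_smul, Matrix.smul_mul]
  have hone : (1 : Matrix n n ℂ) = V * (diagonal 1 : Matrix n n ℂ) * V⁻¹ := by simp
  subst hA
  rw [hconj, Units.conj_pow, hconj, hconj, Matrix.exp_units_conj, ← diagonal_smul,
    Matrix.exp_diagonal, hone, ← add_mul, ← sub_mul, ← mul_add, ← mul_sub, diagonal_pow,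
    ← diagonal_smul, ← diagonal_smul, diagonal_add, diagonal_sub]
  congr 3
  funext i
  rw [Pi.coe_exp, ← Complex.exp_eq_exp_ℂ]
  simpa using hexp i

theorem Matrix.exp_mul_conjTranspose_exp_of_conjTranspose_eq_neg {n : Type*} [Fintype n]
    [DecidableEq n] {A : Matrix n n ℂ} (hA : Aᴴ = -A) :
    NormedSpace.exp A * (NormedSpace.exp A)ᴴ = 1 := by
  rw [← Matrix.exp_conjTranspose, hA,
    ← Matrix.exp_add_of_commute _ _ (Commute.refl A).neg_right, add_neg_cancel,
    NormedSpace.exp_zero]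

theorem Matrix.conjTranspose_mul_self_conjTranspose_mul_of_mul_conjTranspose_eq_one {n : Type*}
    [Fintype n] [DecidableEq n] {U : Matrix n n ℂ} (hU : U * Uᴴ = 1) (K : Matrix n n ℂ) :
    (Uᴴ * K)ᴴ * (Uᴴ * K) = Kᴴ * K := by
  rw [conjTranspose_mul, conjTranspose_conjTranspose, Matrix.mul_assoc, ← Matrix.mul_assoc U, hU,
    Matrix.one_mul]

set_option maxHeartbeats 1000000 in
theorem diagonal_add_Hqs_mul_diagonal_add_half_smul_Hqs :
    (diagonal ![1, 1, 1, 1, 1, -1, 1, 1] + Hqs) *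
      (diagonal ![1, 1, 1, 1 / 2, 1, -1 / 2, 1, 1] + (1 / 2 : ℂ) • Hqs) = 1 := by
  ext i j
  fin_cases i <;> fin_cases j <;>
    simp [Hqs, Matrix.mul_apply, Fin.sum_univ_eight, one_apply] <;> norm_num

-- The columns `3` and `5` are the eigenvectors `e₃ ± e₅` of `Hqs` for the eigenvalues `±1`.
noncomputable def hqsEigenbasis : (Matrix (Fin 8) (Fin 8) ℂ)ˣ :=
  ⟨_, _, diagonal_add_Hqs_mul_diagonal_add_half_smul_Hqs,
    mul_eq_one_comm.mp diagonal_add_Hqs_mul_diagonal_add_half_smul_Hqs⟩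

set_option maxHeartbeats 1000000 in
theorem Hqs_eq_conj_diagonal :
    Hqs = hqsEigenbasis * (diagonal ![0, 0, 0, 1, 0, -1, 0, 0] : Matrix (Fin 8) (Fin 8) ℂ) *
      hqsEigenbasis⁻¹ := by
  ext i j
  fin_cases i <;> fin_cases j <;>
    simp [hqsEigenbasis, Hqs, Matrix.mul_apply, Fin.sum_univ_eight] <;> norm_num

theorem Hqs_sq : Hqs ^ 2 = diagonal fun i => if i = 3 ∨ i = 5 then 1 else 0 := by
  ext i j
  fin_cases i <;> fin_cases j <;> simp [Hqs, sq, Matrix.mul_apply]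

theorem Hqs_conjTranspose : Hqsᴴ = Hqs := by
  ext i j
  simp only [Hqs, conjTranspose_apply, of_apply, apply_ite star, star_one, star_zero]
  congr 1
  exact propext (by tauto)

theorem Uqs_eq (t : ℝ) :
    Uqs t = 1 + (Complex.cos t - 1) • Hqs ^ 2 - (I * Complex.sin t) • Hqs :=
  Matrix.exp_neg_I_mul_smul_eq_of_conj_diagonal _ _ Hqs_eq_conj_diagonal
    (fun i => by fin_cases i <;> simp) t

theorem Uqs_mul_conjTranspose (t : ℝ) : Uqs t * (Uqs t)ᴴ = 1 :=
  Matrix.exp_mul_conjTranspose_exp_of_conjTranspose_eq_neg <| by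
    rw [conjTranspose_smul, Hqs_conjTranspose, ← neg_smul]
    simp

theorem Uqs_apply_self (t : ℝ) (i : Fin 8) :
    Uqs t i i = if i = 3 ∨ i = 5 then (Real.cos t : ℂ) else 1 := by
  rw [Uqs_eq, Hqs_sq]
  fin_cases i <;> simp [Hqs]

theorem kronI4_diagonal (d : Fin 2 → ℂ) :
    kronI4 (diagonal d) = diagonal fun i : Fin 8 => d ⟨i / 4, by omega⟩ := by
  ext i j
  simp only [kronI4, of_apply, diagonal_apply, Fin.ext_iff]
  have hdivmod : (i : ℕ) / 4 = j / 4 → (i : ℕ) % 4 = j % 4 → (i : ℕ) = j := by omega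
  split_ifs <;> simp_all

theorem trace_conjTranspose_Uqs_mul_kronI4_diagonal (t : ℝ) (d : Fin 2 → ℂ) :
    ((Uqs t)ᴴ * kronI4 (diagonal d)).trace = ((3 + Real.cos t : ℝ) : ℂ) * (d 0 + d 1) := by
  simp [kronI4_diagonal, trace, mul_diagonal, conjTranspose_apply, Uqs_apply_self,
    Fin.sum_univ_eight, ← Complex.cos_conj]
  ring

theorem trace_conjTranspose_kronI4_diagonal_mul_self (d : Fin 2 → ℂ) :
    ((kronI4 (diagonal d))ᴴ * kronI4 (diagonal d)).trace =
      ((4 * (‖d 0‖ ^ 2 + ‖d 1‖ ^ 2) : ℝ) : ℂ) := by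
  simp [kronI4_diagonal, diagonal_conjTranspose, diagonal_mul_diagonal, Fin.sum_univ_eight,
    Complex.conj_mul']
  ring

theorem Favg_diagonal (t : ℝ) (d e : Fin 2 → ℂ) :
    Favg t (diagonal d) (diagonal e) =
      ((1 / 72 * (4 * (‖d 0‖ ^ 2 + ‖d 1‖ ^ 2 + ‖e 0‖ ^ 2 + ‖e 1‖ ^ 2)
        + (3 + Real.cos t) ^ 2 * (‖d 0 + d 1‖ ^ 2 + ‖e 0 + e 1‖ ^ 2)) : ℝ) : ℂ) := by
  have hU := Matrix.conjTranspose_mul_self_conjTranspose_mul_of_mul_conjTranspose_eq_one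
    (Uqs_mul_conjTranspose t)
  rw [Favg, hU, hU, trace_add, trace_conjTranspose_kronI4_diagonal_mul_self,
    trace_conjTranspose_kronI4_diagonal_mul_self, trace_conjTranspose_Uqs_mul_kronI4_diagonal,
    trace_conjTranspose_Uqs_mul_kronI4_diagonal, norm_mul, norm_mul, Complex.norm_real,
    Real.norm_eq_abs]
  push_cast [mul_pow, sq_abs]
  ring

/-- Average fidelity of the quantum switch under Phase Damping noise on the first
qubit, with Kraus operators E₀ = [[1,0],[0,√(1−p)]] and E₁ = [[0,0],[0,√p]]:
F_avg = (1/72)·((√(1−p)+1)²·(cos t + 3)² + p·(cos t + 3)² + 8). -/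
theorem average_fidelity_phase_damping (t : ℝ) (p : ℝ) (hp₀ : 0 ≤ p) (hp₁ : p ≤ 1) :
    Favg t !![1, 0; 0, ((Real.sqrt (1 - p) : ℝ) : ℂ)]
        !![0, 0; 0, ((Real.sqrt p : ℝ) : ℂ)] =
      ((1 / 72 * ((Real.sqrt (1 - p) + 1) ^ 2 * (Real.cos t + 3) ^ 2
          + p * (Real.cos t + 3) ^ 2 + 8) : ℝ) : ℂ) := by
  have hs : Real.sqrt (1 - p) ^ 2 = 1 - p := Real.sq_sqrt (by linarith)
  have hq : Real.sqrt p ^ 2 = p := Real.sq_sqrt hp₀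
  rw [← diagonal_vec2, ← diagonal_vec2, Favg_diagonal]
  congr 1
  simp only [Matrix.cons_val_zero, Matrix.cons_val_one, norm_one, norm_zero,
    Complex.norm_real, Real.norm_eq_abs, sq_abs, zero_add, ← Complex.ofReal_one,
    ← Complex.ofReal_add]
  linear_combination 4 / 72 * hs + (4 + (3 + Real.cos t) ^ 2) / 72 * hq
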